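/- arXiv:nlin/0105061 — 2 statements merged into one kernel-verified Lean document; each statement's English description precedes it below -/
import Mathlib

section
/- Let m ≥ 2 and c_1,...,c_m be elements of a commutative ring. Define the m×m matrix Ω_m whose (i,j) entry is the (j-1)-th elementary symmetric polynomial of the variables {c_1,...,c_m} \ {c_i} (i.e., e_{j-1}(c_1,...,ĉ_i,...,c_m), where ĉ_i means c_i is omitted). Then det(Ω_m) = ∏_{1 ≤ i < j ≤ m} (c_i - c_j). -/
/-- Elementary symmetric polynomial `e_k` of `f` over the finite set `s`. -/
noncomputable def esymm {ι R : Type*} [CommRing R] (s : Finset ι) (f : ι → R) (k : ℕ) : R :=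
  ∑ t ∈ s.powersetCard k, ∏ i ∈ t, f i

/-!
Dividing the generating function `∏ₗ (1 + c_l x)` by `1 + c_i x` gives
`e_j(c without c_i) = ∑_{t ≤ j} (-c_i)^t e_{j-t}(c)`. Hence `Ω_m` factors as the Vandermonde
matrix of `-c` times the upper unitriangular Toeplitz matrix with entries `e_{j-t}(c)`, and
`det Ω_m = det V(-c) = ∏_{i<j} (c_i - c_j)`.
-/

open Finset Matrix

section

variable {ι R : Type*} [CommRing R]

theorem esymm_zero (s : Finset ι) (f : ι → R) : esymm s f 0 = 1 := by
  simp [esymm]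

theorem esymm_insert_succ [DecidableEq ι] {a : ι} {s : Finset ι} (ha : a ∉ s) (f : ι → R)
    (k : ℕ) : esymm (insert a s) f (k + 1) = esymm s f (k + 1) + f a * esymm s f k := by
  have ha' : ∀ u ∈ s.powersetCard k, a ∉ u := fun u hu hau => ha ((mem_powersetCard.mp hu).1 hau)
  have hdisj : Disjoint (s.powersetCard (k + 1)) ((s.powersetCard k).image (insert a)) := by
    refine disjoint_left.mpr fun t ht ht' => ?_
    obtain ⟨u, -, rfl⟩ := mem_image.mp ht'
    exact ha ((mem_powersetCard.mp ht).1 (mem_insert_self a u))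
  have hinj : Set.InjOn (insert a) (s.powersetCard k : Set (Finset ι)) := fun u hu v hv huv => by
    rw [← erase_insert (ha' u hu), ← erase_insert (ha' v hv), huv]
  rw [esymm, powersetCard_succ_insert ha, sum_union hdisj, sum_image hinj, esymm, esymm, mul_sum]
  exact congrArg _ (sum_congr rfl fun u hu => prod_insert (ha' u hu))

theorem esymm_erase [DecidableEq ι] {a : ι} {s : Finset ι} (ha : a ∈ s) (f : ι → R) (k : ℕ) :
    esymm (s.erase a) f k = ∑ t ∈ range (k + 1), (-f a) ^ t * esymm s f (k - t) := by
  induction k with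
  | zero => simp [esymm_zero]
  | succ k ih =>
    have h := esymm_insert_succ (notMem_erase a s) f k
    rw [insert_erase ha] at h
    have hshift : ∑ t ∈ range (k + 1), (-f a) ^ (t + 1) * esymm s f (k + 1 - (t + 1))
        = -f a * esymm (s.erase a) f k := by
      rw [ih, mul_sum]
      exact sum_congr rfl fun t _ => by rw [Nat.add_sub_add_right, pow_succ]; ring
    rw [sum_range_succ', hshift, pow_zero, one_mul, Nat.sub_zero, h]
    ring

end

section

variable {R : Type*} [CommRing R] {m : ℕ}

-- The `if` matters: for `t > j` the truncated `j - t` is `0`, and `e_0 = 1`.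
noncomputable def esymmToeplitz (c : Fin m → R) : Matrix (Fin m) (Fin m) R :=
  of fun t j => if t ≤ j then esymm univ c (j - t : ℕ) else 0

theorem det_esymmToeplitz (c : Fin m → R) : (esymmToeplitz c).det = 1 := by
  have hupper : (esymmToeplitz c).IsUpperTriangular := fun t j (hjt : j < t) => if_neg hjt.not_ge
  rw [det_of_isUpperTriangular hupper]
  exact prod_eq_one fun t _ => by simp [esymmToeplitz, esymm_zero]

theorem of_esymm_erase_eq_vandermonde_mul (c : Fin m → R) :
    of (fun i j : Fin m => esymm (univ.erase i) c j) = vandermonde (-c) * esymmToeplitz c := by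
  ext i j
  rw [of_apply, esymm_erase (mem_univ i), mul_apply]
  simp only [vandermonde_apply, esymmToeplitz, of_apply, Pi.neg_apply, mul_ite, mul_zero]
  rw [← sum_filter, filter_ge_eq_Iic, Nat.range_succ_eq_Iic, ← Fin.map_valEmbedding_Iic, sum_map]
  rfl

theorem det_of_esymm_erase (c : Fin m → R) :
    (of fun i j : Fin m => esymm (univ.erase i) c j).det = ∏ i, ∏ j ∈ Ioi i, (c i - c j) := by
  rw [of_esymm_erase_eq_vandermonde_mul, det_mul, det_esymmToeplitz, mul_one, det_vandermonde]
  simp only [Pi.neg_apply, neg_sub_neg]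

end

theorem stmt3_general {R : Type*} [CommRing R] (m : ℕ) (c : Fin m → R) :
    Matrix.det (Matrix.of fun i j : Fin m => esymm (Finset.univ.erase i) c (j : ℕ))
      = ∏ p ∈ Finset.univ.filter (fun p : Fin m × Fin m => p.1 < p.2), (c p.1 - c p.2) := by
  rw [det_of_esymm_erase]
  exact (prod_finset_product' _ _ _ (by simp)).symm

theorem stmt3 {R : Type*} [CommRing R] (m : ℕ) (hm : 2 ≤ m) (c : Fin m → R) :
    Matrix.det (Matrix.of fun i j : Fin m => esymm (Finset.univ.erase i) c (j : ℕ))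
      = ∏ p ∈ Finset.univ.filter (fun p : Fin m × Fin m => p.1 < p.2), (c p.1 - c p.2) :=
  stmt3_general m c
end

section
/- Let L(λ) = C + D(λ) be the m×m matrix with C = diag(c_1,...,c_m) and D_{ij}(λ) = Σ_{s=1}^N μ_s φ_{is} ψ_{js}/(λ − λ_s), where the λ_s are distinct and the μ_s are nonzero. With the Poisson bracket {f,g} = Σ_{i=1}^m Σ_{s=1}^N μ_s^{-1} (∂f/∂ψ_{is} ∂g/∂φ_{is} − ∂f/∂φ_{is} ∂g/∂ψ_{is}) on functions of the 2mN variables φ_{is}, ψ_{is}, the entrywise brackets satisfy: {L_{ij}(λ), L_{kl}(μ)} = 0 when i ≠ l and j ≠ k; = (1/(μ−λ))(L_{kj}(μ) − L_{kj}(λ)) when i = l and j ≠ k; = (1/(μ−λ))(L_{il}(λ) − L_{il}(μ)) when i ≠ l and j = k; and = (1/(μ−λ))[(L_{ii}(λ) − L_{ii}(μ)) − (L_{jj}(λ) − L_{jj}(μ))] when i = l and j = k, for λ ≠ μ both distinct from all λ_s. -/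
/-! The entries of `L` are bilinear in `φ`, `ψ`, so the bracket of `L_{ij}(λ)` and `L_{kl}(μ)`
splits over the sites `s` into `μ_s (δ_{jk} φ_{is} ψ_{ls} - δ_{il} φ_{ks} ψ_{js}) / ((λ - λ_s)(μ - λ_s))`.
The partial fraction decomposition
`1 / ((λ - λ_s)(μ - λ_s)) = (1 / (μ - λ)) (1 / (λ - λ_s) - 1 / (μ - λ_s))`
turns each of the two sums into a difference `L_{pq}(λ) - L_{pq}(μ)`, in which `C` cancels. -/

/-- Phase space `ℝ^{2mN}` with coordinates `φ_{is}`, `ψ_{is}`. -/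
abbrev PS (m N : ℕ) := ((Fin m × Fin N) → ℝ) × ((Fin m × Fin N) → ℝ)

/-- Partial derivative with respect to `φ_{is}`. -/
noncomputable def pderivPhi {m N : ℕ} (f : PS m N → ℝ) (i : Fin m) (s : Fin N)
    (x : PS m N) : ℝ :=
  deriv (fun t => f (Function.update x.1 (i, s) t, x.2)) (x.1 (i, s))

/-- Partial derivative with respect to `ψ_{is}`. -/
noncomputable def pderivPsi {m N : ℕ} (f : PS m N → ℝ) (i : Fin m) (s : Fin N)
    (x : PS m N) : ℝ :=
  deriv (fun t => f (x.1, Function.update x.2 (i, s) t)) (x.2 (i, s))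

/-- The weighted canonical Poisson bracket
`{f,g} = Σ_{i,s} μ_s⁻¹ (∂f/∂ψ_{is} ∂g/∂φ_{is} − ∂f/∂φ_{is} ∂g/∂ψ_{is})`. -/
noncomputable def pbr {m N : ℕ} (mus : Fin N → ℝ) (f g : PS m N → ℝ) (x : PS m N) : ℝ :=
  ∑ i : Fin m, ∑ s : Fin N, (mus s)⁻¹ *
    (pderivPsi f i s x * pderivPhi g i s x - pderivPhi f i s x * pderivPsi g i s x)

/-- The entry `L_{ij}(λ) = δ_{ij} c_i + Σ_s μ_s φ_{is} ψ_{js} / (λ − λ_s)`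
of the Lax matrix, as a function on phase space. -/
noncomputable def Lent {m N : ℕ} (c : Fin m → ℝ) (ls mus : Fin N → ℝ) (la : ℝ)
    (i j : Fin m) (x : PS m N) : ℝ :=
  (if i = j then c i else 0) + ∑ s, mus s * x.1 (i, s) * x.2 (j, s) / (la - ls s)

lemma pderivPhi_Lent {m N : ℕ} (c : Fin m → ℝ) (ls mus : Fin N → ℝ) (la : ℝ)
    (i j a : Fin m) (s : Fin N) (x : PS m N) :
    pderivPhi (Lent c ls mus la i j) a s x
      = if a = i then mus s * x.2 (j, s) / (la - ls s) else 0 := by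
  have hcoord (u : Fin N) := hasDerivAt_pi.mp (hasDerivAt_update x.1 (a, s) (x.1 (a, s))) (i, u)
  have hL := ((HasDerivAt.fun_sum (u := Finset.univ) fun u _ =>
    (((hcoord u).const_mul (mus u)).mul_const (x.2 (j, u))).div_const (la - ls u)).const_add
      (if i = j then c i else 0))
  unfold pderivPhi Lent
  rw [hL.deriv]
  by_cases hai : a = i
  · subst hai
    simp [Pi.single_apply, ite_div]
  · simp [Ne.symm hai, hai]

lemma pderivPsi_Lent {m N : ℕ} (c : Fin m → ℝ) (ls mus : Fin N → ℝ) (la : ℝ)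
    (i j a : Fin m) (s : Fin N) (x : PS m N) :
    pderivPsi (Lent c ls mus la i j) a s x
      = if a = j then mus s * x.1 (i, s) / (la - ls s) else 0 := by
  have hcoord (u : Fin N) := hasDerivAt_pi.mp (hasDerivAt_update x.2 (a, s) (x.2 (a, s))) (j, u)
  have hL := ((HasDerivAt.fun_sum (u := Finset.univ) fun u _ =>
    ((hcoord u).const_mul (mus u * x.1 (i, u))).div_const (la - ls u)).const_add
      (if i = j then c i else 0))
  unfold pderivPsi Lent
  rw [hL.deriv]
  by_cases haj : a = j
  · subst haj
    simp [Pi.single_apply, ite_div]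
  · simp [Ne.symm haj, haj]

lemma pbr_Lent_eq_sum {m N : ℕ} (c : Fin m → ℝ) (ls mus : Fin N → ℝ) (la mu : ℝ)
    (i j k l : Fin m) (x : PS m N) :
    pbr mus (Lent c ls mus la i j) (Lent c ls mus mu k l) x
      = ∑ s, mus s * ((la - ls s)⁻¹ * (mu - ls s)⁻¹) *
          ((if j = k then x.1 (i, s) * x.2 (l, s) else 0)
            - (if i = l then x.1 (k, s) * x.2 (j, s) else 0)) := by
  unfold pbr
  simp only [pderivPhi_Lent, pderivPsi_Lent]
  rw [Finset.sum_comm]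
  refine Finset.sum_congr rfl fun s _ => ?_
  rw [← Finset.mul_sum, Finset.sum_sub_distrib]
  simp only [ite_mul, zero_mul, Finset.sum_ite_eq', Finset.mem_univ, if_true]
  obtain hμ | hμ := eq_or_ne (mus s) 0
  · simp [hμ]
  · rw [inv_mul_eq_iff_eq_mul₀ hμ]
    split_ifs <;> ring

lemma Lent_sub_Lent {m N : ℕ} (c : Fin m → ℝ) (ls mus : Fin N → ℝ) (la mu : ℝ)
    (p q : Fin m) (x : PS m N) :
    Lent c ls mus la p q x - Lent c ls mus mu p q x
      = ∑ s, mus s * ((la - ls s)⁻¹ - (mu - ls s)⁻¹) * (x.1 (p, s) * x.2 (q, s)) := by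
  simp only [Lent, add_sub_add_left_eq_sub, ← Finset.sum_sub_distrib]
  exact Finset.sum_congr rfl fun s _ => by ring

lemma inv_sub_mul_inv_sub {K : Type*} [Field K] {la mu l : K} (hlm : la ≠ mu) (hla : la ≠ l)
    (hmu : mu ≠ l) : (la - l)⁻¹ * (mu - l)⁻¹ = (mu - la)⁻¹ * ((la - l)⁻¹ - (mu - l)⁻¹) := by
  rw [inv_sub_inv' (sub_ne_zero.2 hla) (sub_ne_zero.2 hmu), sub_sub_sub_cancel_right]
  field_simp [sub_ne_zero.2 hlm.symm]

lemma pbr_Lent_eq_sub_Lent {m N : ℕ} (c : Fin m → ℝ) (ls mus : Fin N → ℝ) {la mu : ℝ}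
    (hlm : la ≠ mu) (hla : ∀ s, la ≠ ls s) (hmu : ∀ s, mu ≠ ls s) (i j k l : Fin m) (x : PS m N) :
    pbr mus (Lent c ls mus la i j) (Lent c ls mus mu k l) x
      = (mu - la)⁻¹ *
          ((if j = k then Lent c ls mus la i l x - Lent c ls mus mu i l x else 0)
            - (if i = l then Lent c ls mus la k j x - Lent c ls mus mu k j x else 0)) := by
  rw [pbr_Lent_eq_sum]
  split_ifs <;>
    simp only [Lent_sub_Lent, Finset.mul_sum, ← Finset.sum_sub_distrib, sub_zero, zero_sub,
      sub_self, mul_zero, Finset.sum_const_zero, ← Finset.sum_neg_distrib] <;>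
    refine Finset.sum_congr rfl fun s _ => ?_ <;>
    rw [inv_sub_mul_inv_sub hlm (hla s) (hmu s)] <;>
    ring

theorem stmt10_general (m N : ℕ) (c : Fin m → ℝ) (ls mus : Fin N → ℝ)
    (la mu : ℝ) (hlm : la ≠ mu) (hla : ∀ s, la ≠ ls s) (hmu : ∀ s, mu ≠ ls s)
    (i j k l : Fin m) (x : PS m N) :
    (i ≠ l → j ≠ k →
      pbr mus (Lent c ls mus la i j) (Lent c ls mus mu k l) x = 0) ∧
    (i = l → j ≠ k →
      pbr mus (Lent c ls mus la i j) (Lent c ls mus mu k l) x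
        = (1 / (mu - la)) * (Lent c ls mus mu k j x - Lent c ls mus la k j x)) ∧
    (i ≠ l → j = k →
      pbr mus (Lent c ls mus la i j) (Lent c ls mus mu k l) x
        = (1 / (mu - la)) * (Lent c ls mus la i l x - Lent c ls mus mu i l x)) ∧
    (i = l → j = k →
      pbr mus (Lent c ls mus la i j) (Lent c ls mus mu k l) x
        = (1 / (mu - la)) *
          ((Lent c ls mus la i i x - Lent c ls mus mu i i x)
            - (Lent c ls mus la j j x - Lent c ls mus mu j j x))) := by
  simp only [pbr_Lent_eq_sub_Lent c ls mus hlm hla hmu, one_div]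
  refine ⟨fun hil hjk => ?_, fun hil hjk => ?_, fun hil hjk => ?_, fun hil hjk => ?_⟩
  · simp [hil, hjk]
  · subst hil; simp [hjk]
  · subst hjk; simp [hil]
  · subst hil hjk; simp

theorem stmt10 (m N : ℕ) (c : Fin m → ℝ) (ls mus : Fin N → ℝ)
    (hls : Function.Injective ls) (hmus : ∀ s, mus s ≠ 0)
    (la mu : ℝ) (hlm : la ≠ mu) (hla : ∀ s, la ≠ ls s) (hmu : ∀ s, mu ≠ ls s)
    (i j k l : Fin m) (x : PS m N) :
    (i ≠ l → j ≠ k →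
      pbr mus (Lent c ls mus la i j) (Lent c ls mus mu k l) x = 0) ∧
    (i = l → j ≠ k →
      pbr mus (Lent c ls mus la i j) (Lent c ls mus mu k l) x
        = (1 / (mu - la)) * (Lent c ls mus mu k j x - Lent c ls mus la k j x)) ∧
    (i ≠ l → j = k →
      pbr mus (Lent c ls mus la i j) (Lent c ls mus mu k l) x
        = (1 / (mu - la)) * (Lent c ls mus la i l x - Lent c ls mus mu i l x)) ∧
    (i = l → j = k →
      pbr mus (Lent c ls mus la i j) (Lent c ls mus mu k l) x
        = (1 / (mu - la)) *
          ((Lent c ls mus la i i x - Lent c ls mus mu i i x)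
            - (Lent c ls mus la j j x - Lent c ls mus mu j j x))) :=
  stmt10_general m N c ls mus la mu hlm hla hmu i j k l x
end
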